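/- Let k be a field, let F = x_n^d + Σ_{i=0}^{n−3} x_i G_i(x_0,…,x_n) with each G_i homogeneous of degree d−1, let X = V_+(F) ⊆ P^n, and let I be the ideal of P = k[z_{ij} : 0 ≤ i ≤ n, j = 0,1] defining the Segre product X × P^1 ⊆ P^{2n+1}. Then ara_h(I) ≤ 2n−1; explicitly, setting [i,j] = z_{i0}z_{j1} − z_{j0}z_{i1}, F_0 = F(z_{00},…,z_{n0}), F_1 = F(z_{01},…,z_{n1}), and h_t = Σ_{i<j, i+j=t}[i,j] for t = 1,…,2n−3, one has √I = √((h_1,…,h_{2n−3}, F_0, F_1)). -/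

import Mathlib

/-!
STATEMENT 12: Let `k` be a field, let `F = xₙ^d + Σ_{i=0}^{n−3} xᵢ Gᵢ(x₀,…,xₙ)` with each
`Gᵢ` homogeneous of degree `d−1`, let `X = V₊(F) ⊆ ℙⁿ`, and let `I` be the ideal of
`P = k[z_{ij} : 0 ≤ i ≤ n, j = 0,1]` defining the Segre product `X × ℙ¹ ⊆ ℙ^{2n+1}`.
Then `ara_h(I) ≤ 2n−1`; explicitly, setting `[i,j] = z_{i0}z_{j1} − z_{j0}z_{i1}`,
`F₀ = F(z₀₀,…,z_{n0})`, `F₁ = F(z₀₁,…,z_{n1})` and `h_t = Σ_{i<j, i+j=t} [i,j]` for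
`t = 1,…,2n−3`, one has `√I = √((h₁,…,h_{2n−3},F₀,F₁))`.
-/

open MvPolynomial

/-- The ideal of `P = k[z_{ij}]` defining the Segre product
`V₊(a) × V₊(b) ⊆ ℙ^{nm+n+m}`: the kernel of the map `z_{ij} ↦ x_i y_j (mod a,b)`. -/
noncomputable def segreIdeal (k : Type*) [Field k] (n m : ℕ)
    (a : Ideal (MvPolynomial (Fin (n+1)) k)) (b : Ideal (MvPolynomial (Fin (m+1)) k)) :
    Ideal (MvPolynomial (Fin (n+1) × Fin (m+1)) k) :=
  RingHom.ker (MvPolynomial.aeval (R := k) (fun p : Fin (n+1) × Fin (m+1) =>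
    Ideal.Quotient.mk
      (a.map (MvPolynomial.rename (Sum.inl : Fin (n+1) → Fin (n+1) ⊕ Fin (m+1)))
        ⊔ b.map (MvPolynomial.rename (Sum.inr : Fin (m+1) → Fin (n+1) ⊕ Fin (m+1))))
      (X (Sum.inl p.1) * X (Sum.inr p.2))))

/-- homogeneous arithmetical rank -/
noncomputable def araH {k : Type*} [CommRing k] {σ : Type*} (I : Ideal (MvPolynomial σ k)) : ℕ :=
  sInf {t | ∃ f : Fin t → MvPolynomial σ k, (∀ i, ∃ d, (f i).IsHomogeneous d) ∧
    (Ideal.span (Set.range f)).radical = I.radical}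

/-- the 2-minor `[i,j] = z_{i0} z_{j1} - z_{j0} z_{i1}` -/
noncomputable def minor {k : Type*} [Field k] {n : ℕ} (i j : Fin (n+1)) :
    MvPolynomial (Fin (n+1) × Fin 2) k :=
  X (i, 0) * X (j, 1) - X (j, 0) * X (i, 1)

/-- `h_t = Σ_{i<j, i+j=t} [i,j]` -/
noncomputable def hPoly {k : Type*} [Field k] {n : ℕ} (t : ℕ) :
    MvPolynomial (Fin (n+1) × Fin 2) k :=
  ∑ p ∈ Finset.univ.filter
      (fun p : Fin (n+1) × Fin (n+1) => p.1 < p.2 ∧ (p.1 : ℕ) + (p.2 : ℕ) = t),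
    minor p.1 p.2

/-- `F` evaluated on the `j`-th column of the matrix `(z_{ij})` -/
noncomputable def colSubst {k : Type*} [Field k] {n : ℕ} (j : Fin 2)
    (F : MvPolynomial (Fin (n+1)) k) : MvPolynomial (Fin (n+1) × Fin 2) k :=
  MvPolynomial.aeval (fun i : Fin (n+1) => X (i, j)) F

/-!
A homomorphism `φ` from `P` to a field that kills the proposed generators sends the matrix
`(z_{ij})` to a `2 × (n+1)` matrix with columns `v, w` on which every `h_t`, `t ≤ 2n-3`, and `F`
vanish. Inducting along antidiagonals, the three-term Plücker relation makes the minors on the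
antidiagonal `t` pairwise orthogonal, so each of them squares to zero: all `[i,j]` with
`i + j ≤ 2n-3` vanish. The two remaining minors `[n-2,n]` and `[n-1,n]` are annihilated by every
coordinate `x_i`, `i ≤ n-3`, while `F(v) = F(w) = 0` puts `v_n^d` and `w_n^d` into the ideal of
these coordinates; so they vanish as well. Thus the matrix has rank at most one,
`φ z_{ij} = s_i t_j` with `F(s) = 0`, and `φ` kills the whole Segre ideal. Since this holds for
every such `φ`, the Segre ideal lies in the radical of the `2n-1` homogeneous generators.
-/

theorem MvPolynomial.IsHomogeneous.eval₂_const_mul {R S σ : Type*} [CommSemiring R]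
    [CommSemiring S] {F : MvPolynomial σ R} {d : ℕ} (hF : F.IsHomogeneous d) (χ : R →+* S)
    (r : S) (g : σ → S) :
    MvPolynomial.eval₂ χ (fun i => r * g i) F = r ^ d * MvPolynomial.eval₂ χ g F := by
  rw [eval₂_eq, eval₂_eq, Finset.mul_sum]
  refine Finset.sum_congr rfl fun μ hμ => ?_
  have hdeg : ∑ i ∈ μ.support, μ i = d := by
    rw [← hF (mem_support_iff.mp hμ), Finsupp.weight_apply]
    simp [Finsupp.sum]
  rw [Finset.prod_congr rfl fun i _ => mul_pow r (g i) (μ i), Finset.prod_mul_distrib,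
    Finset.prod_pow_eq_pow_sum, hdeg]
  ring

universe u

theorem Ideal.le_radical_of_forall_le_ker {R : Type u} [CommRing R] {I J : Ideal R}
    (h : ∀ (K : Type u) [Field K] (φ : R →+* K),
      J ≤ RingHom.ker φ → I ≤ RingHom.ker φ) :
    I ≤ J.radical := by
  rw [Ideal.radical_eq_sInf]
  refine le_sInf fun p ⟨hJp, hp⟩ => ?_
  have hker : RingHom.ker (algebraMap R p.ResidueField) = p :=
    Ideal.ker_algebraMap_residueField p
  exact hker ▸ h p.ResidueField _ (hker.symm ▸ hJp)

noncomputable def segreMap (R σ τ : Type*) [CommSemiring R] :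
    MvPolynomial (σ × τ) R →ₐ[R] MvPolynomial (σ ⊕ τ) R :=
  aeval fun p => X (Sum.inl p.1) * X (Sum.inr p.2)

theorem eval₂_segreMap {R σ τ K : Type*} [CommSemiring R] [CommSemiring K]
    (φ : MvPolynomial (σ × τ) R →+* K) {s : σ → K} {t : τ → K}
    (hφ : ∀ p, φ (X p) = s p.1 * t p.2) (g : MvPolynomial (σ × τ) R) :
    eval₂ (φ.comp C) (Sum.elim s t) (segreMap R σ τ g) = φ g := by
  suffices (eval₂Hom (φ.comp C) (Sum.elim s t)).comp (segreMap R σ τ).toRingHom = φ from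
    RingHom.congr_fun this g
  refine ringHom_ext (fun r => ?_) fun p => ?_
  · simp [segreMap]
  · simp [segreMap, hφ]

section SegreIdeal

variable {k : Type*} [Field k] {n m : ℕ}

theorem segreIdeal_eq_comap (a : Ideal (MvPolynomial (Fin (n+1)) k))
    (b : Ideal (MvPolynomial (Fin (m+1)) k)) :
    segreIdeal k n m a b = (a.map (rename Sum.inl) ⊔ b.map (rename Sum.inr)).comap
      (segreMap k (Fin (n+1)) (Fin (m+1))) := by
  have : aeval (R := k) (fun p : Fin (n+1) × Fin (m+1) =>
        Ideal.Quotient.mk (a.map (rename Sum.inl) ⊔ b.map (rename Sum.inr))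
          (X (Sum.inl p.1) * X (Sum.inr p.2))) =
      (Ideal.Quotient.mkₐ k _).comp (segreMap k (Fin (n+1)) (Fin (m+1))) :=
    algHom_ext fun p => by simp [segreMap]
  ext g
  rw [segreIdeal, this, RingHom.mem_ker, Ideal.mem_comap, AlgHom.comp_apply,
    Ideal.Quotient.mkₐ_eq_mk, Ideal.Quotient.eq_zero_iff_mem]

theorem segreIdeal_le_ker {K : Type*} [CommRing K] {a : Ideal (MvPolynomial (Fin (n+1)) k)}
    {b : Ideal (MvPolynomial (Fin (m+1)) k)} (φ : MvPolynomial (Fin (n+1) × Fin (m+1)) k →+* K)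
    {s : Fin (n+1) → K} {t : Fin (m+1) → K} (hφ : ∀ p, φ (X p) = s p.1 * t p.2)
    (ha : a ≤ RingHom.ker (eval₂Hom (φ.comp C) s))
    (hb : b ≤ RingHom.ker (eval₂Hom (φ.comp C) t)) :
    segreIdeal k n m a b ≤ RingHom.ker φ := by
  intro g hg
  rw [segreIdeal_eq_comap, Ideal.mem_comap] at hg
  have hle : a.map (rename Sum.inl) ⊔ b.map (rename Sum.inr) ≤
      RingHom.ker (eval₂Hom (φ.comp C) (Sum.elim s t)) :=
    sup_le (Ideal.map_le_iff_le_comap.2 fun f hf => ?_)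
      (Ideal.map_le_iff_le_comap.2 fun f hf => ?_)
  · rw [RingHom.mem_ker, ← eval₂_segreMap φ hφ]
    exact hle hg
  · simpa [eval₂_rename] using ha hf
  · simpa [eval₂_rename] using hb hf

theorem segreMap_colSubst {F : MvPolynomial (Fin (n+1)) k} {d : ℕ} (hF : F.IsHomogeneous d)
    (j : Fin 2) :
    segreMap k (Fin (n+1)) (Fin 2) (colSubst j F) = X (Sum.inr j) ^ d * rename Sum.inl F := by
  rw [colSubst, ← AlgHom.comp_apply, comp_aeval, aeval_def]
  simp only [segreMap, aeval_X, mul_comm (X (Sum.inl _)), hF.eval₂_const_mul]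
  rw [rename_eq_aeval, aeval_def]
  rfl

theorem colSubst_mem_segreIdeal {a : Ideal (MvPolynomial (Fin (n+1)) k)}
    (b : Ideal (MvPolynomial (Fin 2) k)) {F : MvPolynomial (Fin (n+1)) k} (haF : F ∈ a) {d : ℕ}
    (hF : F.IsHomogeneous d) (j : Fin 2) : colSubst j F ∈ segreIdeal k n 1 a b := by
  rw [segreIdeal_eq_comap, Ideal.mem_comap, segreMap_colSubst hF]
  exact Ideal.mem_sup_left (Ideal.mul_mem_left _ _ (Ideal.mem_map_of_mem _ haF))

theorem hPoly_mem_segreIdeal (a : Ideal (MvPolynomial (Fin (n+1)) k))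
    (b : Ideal (MvPolynomial (Fin 2) k)) (t : ℕ) : hPoly t ∈ segreIdeal k n 1 a b := by
  rw [segreIdeal_eq_comap, Ideal.mem_comap, hPoly, map_sum]
  refine sum_mem fun p _ => ?_
  simp only [minor, segreMap, map_sub, map_mul, aeval_X]
  rw [sub_eq_zero_of_eq (by ring)]
  exact zero_mem _

end SegreIdeal

def antidiagonalPairs (N t : ℕ) : Finset (Fin N × Fin N) :=
  Finset.univ.filter fun p => p.1 < p.2 ∧ (p.1 : ℕ) + p.2 = t

theorem hPoly_eq_sum_antidiagonalPairs {k : Type*} [Field k] {n : ℕ} (t : ℕ) :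
    hPoly (k := k) (n := n) t = ∑ p ∈ antidiagonalPairs (n+1) t, minor p.1 p.2 :=
  rfl

section Minors

variable {D : Type*} [CommRing D]

/-- The three-term Plücker relation `[x,i][j,y] - [x,j][i,y] + [x,y][i,j] = 0`. -/
theorem minor_mul_minor_eq_zero_of_antidiagonal {N t : ℕ} {v w : Fin N → D}
    (hbelow : ∀ x y : Fin N, (x : ℕ) + y < t → v x * w y = v y * w x)
    {i j : Fin N} (hij : (i, j) ∈ antidiagonalPairs N t) {p : Fin N × Fin N}
    (hp : p ∈ antidiagonalPairs N t) (hne : p ≠ (i, j)) :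
    (v i * w j - v j * w i) * (v p.1 * w p.2 - v p.2 * w p.1) = 0 := by
  obtain ⟨x, y⟩ := p
  simp only [antidiagonalPairs, Finset.mem_filter, Finset.mem_univ, true_and,
    Fin.lt_def] at hij hp
  have hxi : (x : ℕ) ≠ i := fun h =>
    hne (Prod.mk.injEq .. ▸ ⟨Fin.ext h, Fin.ext (by omega)⟩)
  rcases lt_or_gt_of_ne hxi with hlt | hgt
  · have e₁ := hbelow x i (by omega)
    have e₂ := hbelow x j (by omega)
    linear_combination (v y * w j - v j * w y) * e₁ + (v i * w y - v y * w i) * e₂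
  · have e₁ := hbelow i x (by omega)
    have e₂ := hbelow i y (by omega)
    linear_combination (v j * w y - v y * w j) * e₁ + (v x * w j - v j * w x) * e₂

theorem mul_eq_mul_of_sum_antidiagonalPairs_eq_zero [IsReduced D] {N T : ℕ} {v w : Fin N → D}
    (h : ∀ t, 1 ≤ t → t ≤ T →
      ∑ p ∈ antidiagonalPairs N t, (v p.1 * w p.2 - v p.2 * w p.1) = 0)
    (i j : Fin N) (hT : (i : ℕ) + j ≤ T) : v i * w j = v j * w i := by
  induction hs : (i : ℕ) + j using Nat.strong_induction_on generalizing i j with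
  | _ t IH =>
  wlog hij : i < j generalizing i j with H
  · rcases (not_lt.1 hij).eq_or_lt with rfl | hji
    · rfl
    · exact (H j i (by omega) (by omega) hji).symm
  have hmem : (i, j) ∈ antidiagonalPairs N t := by simp [antidiagonalPairs, hij, hs]
  have hbelow : ∀ x y : Fin N, (x : ℕ) + y < t → v x * w y = v y * w x :=
    fun x y hxy => IH _ hxy x y (by omega) rfl
  have hsq : (v i * w j - v j * w i) * (v i * w j - v j * w i) = 0 := by
    have hsum := congrArg ((v i * w j - v j * w i) * ·)
      (h t (by have : (i : ℕ) < j := hij; omega) (hs ▸ hT))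
    simp only [mul_zero, Finset.mul_sum] at hsum
    rwa [← Finset.add_sum_erase _ _ hmem, Finset.sum_eq_zero fun p hp =>
      minor_mul_minor_eq_zero_of_antidiagonal hbelow hmem (Finset.mem_of_mem_erase hp)
        (Finset.ne_of_mem_erase hp), add_zero] at hsum
  exact sub_eq_zero.1 (IsReduced.eq_zero _ ⟨2, by rw [sq, hsq]⟩)

variable [IsDomain D] {ι κ : Type*} [Fintype κ] {v w : ι → D} {d : ℕ}

theorem eq_zero_of_pow_add_sum_eq_zero (hd : d ≠ 0) {x m : D} {u a : κ → D}
    (h : x ^ d + ∑ i, u i * a i = 0) (hu : ∀ i, u i * m = 0) (hm : m ≠ 0) : x = 0 := by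
  have hsum : (∑ i, u i * a i) * m = 0 := by
    rw [Finset.sum_mul]
    exact Finset.sum_eq_zero fun i _ => by linear_combination a i * hu i
  have hxm : x ^ d * m = 0 := by linear_combination m * h - hsum
  exact pow_eq_zero_iff hd |>.1 ((mul_eq_zero.1 hxm).resolve_right hm)

theorem mul_eq_mul_of_pow_add_sum_eq_zero (hd : d ≠ 0) {c L : ι} (e : κ → ι) {a b : κ → D}
    (hv : v L ^ d + ∑ i, v (e i) * a i = 0) (hw : w L ^ d + ∑ i, w (e i) * b i = 0)
    (hL : ∀ i, v (e i) * w L = v L * w (e i)) (hc : ∀ i, v (e i) * w c = v c * w (e i)) :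
    v c * w L = v L * w c := by
  by_contra hne
  have hm : v c * w L - v L * w c ≠ 0 := sub_ne_zero.2 hne
  have hvL := eq_zero_of_pow_add_sum_eq_zero hd hv
    (fun i => by linear_combination v c * hL i - v L * hc i) hm
  have hwL := eq_zero_of_pow_add_sum_eq_zero hd hw
    (fun i => by linear_combination w c * hL i - w L * hc i) hm
  exact hne (by rw [hvL, hwL, mul_zero, zero_mul])

end Minors

theorem exists_eq_smul_of_mul_eq_mul {K σ : Type*} [Field K] {v w : σ → K}
    (h : ∀ i j, v i * w j = v j * w i) :
    ∃ s ∈ ({v, w} : Set (σ → K)), ∃ a b : K, v = a • s ∧ w = b • s := by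
  by_cases hv : v = 0
  · exact ⟨w, by simp, 0, 1, by simp [hv], by simp⟩
  obtain ⟨i₀, hi₀⟩ := Function.ne_iff.1 hv
  refine ⟨v, by simp, 1, w i₀ / v i₀, by simp, funext fun i => ?_⟩
  rw [Pi.smul_apply, smul_eq_mul, div_mul_eq_mul_div, eq_div_iff hi₀]
  linear_combination h i₀ i

theorem map_colSubst {k K : Type*} [Field k] [CommSemiring K] {n : ℕ}
    (φ : MvPolynomial (Fin (n+1) × Fin 2) k →+* K) (j : Fin 2)
    (F : MvPolynomial (Fin (n+1)) k) :
    φ (colSubst j F) = eval₂ (φ.comp C) (fun i => φ (X (i, j))) F := by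
  rw [colSubst, aeval_def, algebraMap_eq, eval₂_comp_left]
  rfl

theorem mul_eq_mul_of_special_hypersurface {R D : Type*} [CommSemiring R] [CommRing D]
    [IsDomain D] {n d : ℕ} (hn : 2 ≤ n) (hd : 1 ≤ d) (χ : R →+* D)
    {G : Fin (n-2) → MvPolynomial (Fin (n+1)) R} {F : MvPolynomial (Fin (n+1)) R}
    (hF : F = X (Fin.last n) ^ d +
      ∑ i : Fin (n-2), X (Fin.castLE ((n.sub_le 2).trans n.le_succ) i) * G i)
    {v w : Fin (n+1) → D}
    (hh : ∀ t, 1 ≤ t → t ≤ 2*n-3 →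
      ∑ p ∈ antidiagonalPairs (n+1) t, (v p.1 * w p.2 - v p.2 * w p.1) = 0)
    (hv : eval₂ χ v F = 0) (hw : eval₂ χ w F = 0) (i j : Fin (n+1)) :
    v i * w j = v j * w i := by
  have hbelow := mul_eq_mul_of_sum_antidiagonalPairs_eq_zero hh
  have hlast : ∀ c : Fin (n+1), n - 2 ≤ c → (c : ℕ) < n →
      v c * w (Fin.last n) = v (Fin.last n) * w c := by
    intro c hc₁ hc₂
    simp only [hF, eval₂_add, eval₂_pow, eval₂_X, eval₂_sum, eval₂_mul] at hv hw
    refine mul_eq_mul_of_pow_add_sum_eq_zero (by omega) _ hv hw (fun i => ?_) (fun i => ?_)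
    · exact hbelow _ _ (by simp only [Fin.val_castLE, Fin.val_last]; omega)
    · exact hbelow _ _ (by simp only [Fin.val_castLE]; omega)
  by_cases hsum : (i : ℕ) + j ≤ 2*n-3
  · exact hbelow i j hsum
  rcases eq_or_ne i j with rfl | hne
  · rfl
  have hi := i.isLt
  have hj := j.isLt
  have hij := Fin.val_ne_of_ne hne
  rcases Nat.lt_succ_iff_lt_or_eq.1 hj with hjn | hjn
  · obtain rfl : i = Fin.last n := Fin.ext (by rw [Fin.val_last]; omega)
    exact (hlast j (by rw [Fin.val_last] at hsum; omega) hjn).symm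
  · obtain rfl : j = Fin.last n := Fin.ext hjn
    exact hlast i (by omega) (by omega)

theorem segreIdeal_le_ker_of_special_hypersurface {k K : Type*} [Field k] [Field K] {n d : ℕ}
    (hn : 2 ≤ n) (hd : 1 ≤ d) {G : Fin (n-2) → MvPolynomial (Fin (n+1)) k}
    {F : MvPolynomial (Fin (n+1)) k}
    (hF : F = X (Fin.last n) ^ d +
      ∑ i : Fin (n-2), X (Fin.castLE ((n.sub_le 2).trans n.le_succ) i) * G i)
    (φ : MvPolynomial (Fin (n+1) × Fin 2) k →+* K)
    (hh : ∀ t, 1 ≤ t → t ≤ 2*n-3 → φ (hPoly t) = 0)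
    (h₀ : φ (colSubst 0 F) = 0) (h₁ : φ (colSubst 1 F) = 0) :
    segreIdeal k n 1 (Ideal.span {F}) ⊥ ≤ RingHom.ker φ := by
  rw [map_colSubst] at h₀ h₁
  have hminors := mul_eq_mul_of_special_hypersurface hn hd (φ.comp C) hF
    (fun t ht₁ ht₂ => by
      simpa [hPoly_eq_sum_antidiagonalPairs, minor] using hh t ht₁ ht₂) h₀ h₁
  obtain ⟨s, hs, a, b, hv, hw⟩ := exists_eq_smul_of_mul_eq_mul hminors
  refine segreIdeal_le_ker φ (s := s) (t := ![a, b]) (fun ⟨i, j⟩ => ?_) ?_ bot_le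
  · fin_cases j
    · simpa [mul_comm] using congrFun hv i
    · simpa [mul_comm] using congrFun hw i
  · rw [Ideal.span_singleton_le_iff_mem, RingHom.mem_ker, coe_eval₂Hom]
    rcases hs with rfl | rfl
    · exact h₀
    · exact h₁

theorem isHomogeneous_hPoly {k : Type*} [Field k] {n : ℕ} (t : ℕ) :
    (hPoly (k := k) (n := n) t).IsHomogeneous 2 :=
  IsHomogeneous.sum _ _ _ fun _ _ =>
    ((isHomogeneous_X _ _).mul (isHomogeneous_X _ _)).sub
      ((isHomogeneous_X _ _).mul (isHomogeneous_X _ _))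

theorem isHomogeneous_colSubst {k : Type*} [Field k] {n d : ℕ} {F : MvPolynomial (Fin (n+1)) k}
    (hF : F.IsHomogeneous d) (j : Fin 2) : (colSubst j F).IsHomogeneous d := by
  have := hF.aeval (fun i => X (i, j)) fun i => isHomogeneous_X k (i, j)
  rwa [one_mul] at this

theorem araH_le {k σ : Type*} [CommRing k] {I : Ideal (MvPolynomial σ k)} {t : ℕ}
    (f : Fin t → MvPolynomial σ k) (hf : ∀ i, ∃ d, (f i).IsHomogeneous d)
    (hrad : (Ideal.span (Set.range f)).radical = I.radical) : araH I ≤ t :=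
  Nat.sInf_le ⟨f, hf, hrad⟩

theorem araH_le_of_special_hypersurface_prod_P1
    (k : Type*) [Field k] (n d : ℕ) (hn : 2 ≤ n) (hd : 1 ≤ d)
    (G : Fin (n-2) → MvPolynomial (Fin (n+1)) k)
    (hG : ∀ i, (G i).IsHomogeneous (d-1))
    (F : MvPolynomial (Fin (n+1)) k)
    (hF : F = X (Fin.last n) ^ d
      + ∑ i : Fin (n-2), X (Fin.castLE (by omega) i) * G i) :
    (Ideal.span ({colSubst 0 F, colSubst 1 F} ∪
        Set.range (fun t : Fin (2*n-3) => hPoly (k := k) (n := n) (t + 1)))).radical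
      = (segreIdeal k n 1 (Ideal.span {F}) ⊥).radical ∧
    araH (segreIdeal k n 1 (Ideal.span {F}) ⊥) ≤ 2*n - 1 := by
  have hFd : F.IsHomogeneous d := hF ▸ (isHomogeneous_X_pow _ _).add
    (IsHomogeneous.sum _ _ _ fun i _ => by
      simpa [Nat.add_sub_cancel' hd] using (isHomogeneous_X k _).mul (hG i))
  set I := segreIdeal k n 1 (Ideal.span {F}) ⊥
  let f : Fin (2*n-3+1+1) → MvPolynomial (Fin (n+1) × Fin 2) k :=
    Fin.cons (colSubst 0 F) (Fin.cons (colSubst 1 F) fun t : Fin (2*n-3) => hPoly (t + 1))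
  have hJ : ({colSubst 0 F, colSubst 1 F} ∪ Set.range fun t : Fin (2*n-3) => hPoly (t + 1)) =
      Set.range f := by
    rw [Fin.range_cons, Fin.range_cons, Set.insert_union, Set.singleton_union]
  have hJI : Ideal.span (Set.range f) ≤ I := by
    rw [← hJ, Ideal.span_le]
    rintro g ((rfl | rfl) | ⟨t, rfl⟩)
    · exact colSubst_mem_segreIdeal ⊥ (Ideal.mem_span_singleton_self F) hFd 0
    · exact colSubst_mem_segreIdeal ⊥ (Ideal.mem_span_singleton_self F) hFd 1
    · exact hPoly_mem_segreIdeal _ ⊥ _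
  have hIJ : I ≤ (Ideal.span (Set.range f)).radical :=
    Ideal.le_radical_of_forall_le_ker fun K _ φ hφ =>
      segreIdeal_le_ker_of_special_hypersurface hn hd hF φ
        (fun t ht₁ ht₂ => hφ (Ideal.subset_span
          ⟨(⟨t - 1, by omega⟩ : Fin (2*n-3)).succ.succ,
            by simp only [f, Fin.cons_succ, Nat.sub_add_cancel ht₁]⟩))
        (hφ (Ideal.subset_span ⟨0, rfl⟩)) (hφ (Ideal.subset_span ⟨1, rfl⟩))
  have hrad : (Ideal.span (Set.range f)).radical = I.radical :=
    le_antisymm (Ideal.radical_mono hJI) (Ideal.radical_le_radical_iff.2 hIJ)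
  refine ⟨hJ ▸ hrad, (araH_le f (fun i => ?_) hrad).trans (by omega)⟩
  refine Fin.cases ⟨d, isHomogeneous_colSubst hFd 0⟩
    (Fin.cases ⟨d, isHomogeneous_colSubst hFd 1⟩ fun t => ⟨2, ?_⟩) i
  simpa [f] using isHomogeneous_hPoly _
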